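/- For divisors D and E on a finite graph, the Baker-Norine rank is superadditive with respect to non-negative ranks: if r_G(D) ≥ 0 and r_G(E) ≥ 0, then r_G(D + E) ≥ r_G(D) + r_G(E). -/

import Mathlib

open Finset

/-- Finite multigraph model: symmetric `m : V → V → ℕ`, `m v w` = number of edges
between `v ≠ w`, `m v v` = number of loops at `v`; the valence counts loops twice. -/
def valence {V : Type*} [Fintype V] (m : V → V → ℕ) (v : V) : ℤ :=
  (∑ u, (m v u : ℤ)) + m v v

/-- The chip-firing divisor `Δ_v` of the vertex `v`. -/
def chipDiv {V : Type*} [Fintype V] [DecidableEq V] (m : V → V → ℕ) (v : V) : V → ℤ :=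
  fun w => if w = v then -(valence m v) + 2 * m v v else m v w

/-- The subgroup of `Div(G) = V → ℤ` generated by the chip-firing divisors;
`D ∼ D'` iff `D - D' ∈ chipGroup m`. -/
def chipGroup {V : Type*} [Fintype V] [DecidableEq V] (m : V → V → ℕ) :
    AddSubgroup (V → ℤ) :=
  AddSubgroup.closure (Set.range (chipDiv m))

/-- A divisor is effective if all its coefficients are non-negative. -/
def Effective {V : Type*} (D : V → ℤ) : Prop := ∀ v, 0 ≤ D v

/-- Connectedness of the multigraph `m`: the simple graph with an edge between the
distinct vertices `v, w` whenever `m v w ≠ 0` is connected. -/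
def IsConn {V : Type*} (m : V → V → ℕ) : Prop :=
  (SimpleGraph.fromRel fun v w => m v w ≠ 0).Connected

/-- The Baker–Norine rank of a divisor `D`: the greatest integer `r ≥ 0` such that for
every effective divisor `D'` of degree `r` the linear system `|D - D'|` is nonempty
(i.e. some effective divisor is chip-firing equivalent to `D - D'`), and `-1` if there
is no such `r`. -/
noncomputable def bnRank {V : Type*} [Fintype V] [DecidableEq V] (m : V → V → ℕ)
    (D : V → ℤ) : ℤ :=
  sSup (insert (-1) {r : ℤ | 0 ≤ r ∧ ∀ D' : V → ℤ, Effective D' → (∑ v, D' v) = r →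
      ∃ F : V → ℤ, Effective F ∧ D - D' - F ∈ chipGroup m})

/-!
Write `a = r(D)`, `b = r(E)`. An effective divisor `D'` of degree `a + b` splits as `A + B` with
`A, B` effective of degrees `a` and `b`; then `D - A ∼ F₁` and `E - B ∼ F₂` with `F₁, F₂`
effective, so `(D + E) - D' ∼ F₁ + F₂`. Hence `a + b` is admissible in the supremum defining
`r(D + E)`, which is bounded above by `deg (D + E)` because chip-firing preserves degree.
-/

section

variable {V : Type*} [Fintype V] [DecidableEq V] (m : V → V → ℕ)

def HasRankAtLeast (D : V → ℤ) (r : ℤ) : Prop :=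
  0 ≤ r ∧ ∀ D' : V → ℤ, Effective D' → (∑ v, D' v) = r →
    ∃ F : V → ℤ, Effective F ∧ D - D' - F ∈ chipGroup m

theorem bnRank_eq_sSup (D : V → ℤ) :
    bnRank m D = sSup (insert (-1) {r | HasRankAtLeast m D r}) :=
  rfl

theorem sum_chipDiv (v : V) : ∑ w, chipDiv m v w = 0 := by
  have hsplit : chipDiv m v = (fun w => (m v w : ℤ)) + Pi.single v (-valence m v + m v v) := by
    ext w
    by_cases h : w = v
    · subst h; simp [chipDiv]; ring
    · simp [chipDiv, h]
  rw [hsplit]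
  simp [Finset.sum_add_distrib, valence]

theorem sum_eq_zero_of_mem_chipGroup {x : V → ℤ} (hx : x ∈ chipGroup m) : ∑ v, x v = 0 := by
  induction hx using AddSubgroup.closure_induction with
  | mem _ hx => obtain ⟨v, rfl⟩ := hx; exact sum_chipDiv m v
  | zero => simp
  | add _ _ _ _ hx hy => simp [Finset.sum_add_distrib, hx, hy]
  | neg _ _ hx => simp [hx]

variable {m}

theorem HasRankAtLeast.le_sum {D : V → ℤ} {r : ℤ} [Nonempty V] (h : HasRankAtLeast m D r) :
    r ≤ ∑ v, D v := by
  obtain ⟨v₀⟩ := ‹Nonempty V›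
  obtain ⟨F, hF, hmem⟩ := h.2 (Pi.single v₀ r)
    (fun w => by by_cases hw : w = v₀ <;> simp [hw, h.1])
    (Fintype.sum_pi_single' v₀ r)
  have hdeg := sum_eq_zero_of_mem_chipGroup m hmem
  have hF_nonneg : 0 ≤ ∑ v, F v := Finset.sum_nonneg fun v _ => hF v
  simp only [Pi.sub_apply, Finset.sum_sub_distrib, Fintype.sum_pi_single'] at hdeg
  omega

theorem bddAbove_hasRankAtLeast [Nonempty V] (D : V → ℤ) :
    BddAbove (insert (-1) {r | HasRankAtLeast m D r}) := by
  refine ⟨max (∑ v, D v) (-1), ?_⟩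
  rintro r (rfl | hr)
  · exact le_max_right _ _
  · exact le_max_of_le_left hr.le_sum

theorem HasRankAtLeast.le_bnRank [Nonempty V] {D : V → ℤ} {r : ℤ} (h : HasRankAtLeast m D r) :
    r ≤ bnRank m D :=
  le_csSup (bddAbove_hasRankAtLeast D) (Set.mem_insert_of_mem _ h)

theorem hasRankAtLeast_bnRank [Nonempty V] {D : V → ℤ} (hD : 0 ≤ bnRank m D) :
    HasRankAtLeast m D (bnRank m D) := by
  rcases Int.csSup_mem ⟨-1, Set.mem_insert _ _⟩ (bddAbove_hasRankAtLeast (m := m) D) with h | h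
  · rw [bnRank_eq_sSup, h] at hD; omega
  · exact h

omit [DecidableEq V] in
theorem exists_effective_split (n : ℕ) {D : V → ℤ} (hD : Effective D) (hn : (n : ℤ) ≤ ∑ v, D v) :
    ∃ A : V → ℤ, Effective A ∧ Effective (D - A) ∧ ∑ v, A v = n := by
  classical
  induction n with
  | zero => exact ⟨0, fun _ => le_rfl, by simpa using hD, by simp⟩
  | succ n ih =>
    obtain ⟨A, hA, hDA, hAn⟩ := ih (by omega)
    have hpos : ∑ _v : V, (0 : ℤ) < ∑ v, (D - A) v := by
      simp only [Finset.sum_const_zero, Pi.sub_apply, Finset.sum_sub_distrib, hAn]; omega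
    obtain ⟨v, -, hv⟩ := Finset.exists_lt_of_sum_lt hpos
    refine ⟨A + Pi.single v 1, fun w => ?_, fun w => ?_, ?_⟩
    · exact add_nonneg (hA w) ((Pi.single_nonneg.2 zero_le_one : (0 : V → ℤ) ≤ Pi.single v 1) w)
    · rcases eq_or_ne w v with rfl | hw
      · simp only [Pi.sub_apply, Pi.add_apply, Pi.single_eq_same] at hv ⊢; omega
      · simpa [hw] using hDA w
    · simp [Finset.sum_add_distrib, hAn]

theorem HasRankAtLeast.add {D E : V → ℤ} {a b : ℤ} (hD : HasRankAtLeast m D a)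
    (hE : HasRankAtLeast m E b) : HasRankAtLeast m (D + E) (a + b) := by
  obtain ⟨ha, hD⟩ := hD
  obtain ⟨hb, hE⟩ := hE
  refine ⟨add_nonneg ha hb, fun D' hD' hdeg => ?_⟩
  obtain ⟨A, hA, hB, hAdeg⟩ := exists_effective_split a.toNat hD' (by omega)
  rw [Int.toNat_of_nonneg ha] at hAdeg
  have hBdeg : ∑ v, (D' - A) v = b := by
    simp only [Pi.sub_apply, Finset.sum_sub_distrib, hAdeg, hdeg]; ring
  obtain ⟨F₁, hF₁, hmem₁⟩ := hD A hA hAdeg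
  obtain ⟨F₂, hF₂, hmem₂⟩ := hE (D' - A) hB hBdeg
  refine ⟨F₁ + F₂, fun v => add_nonneg (hF₁ v) (hF₂ v), ?_⟩
  convert add_mem hmem₁ hmem₂ using 1
  abel

end

theorem bnRank_superadditive_general {V : Type*} [Fintype V] [DecidableEq V] (m : V → V → ℕ)
    (hconn : IsConn m)
    (D E : V → ℤ) (hD : 0 ≤ bnRank m D) (hE : 0 ≤ bnRank m E) :
    bnRank m D + bnRank m E ≤ bnRank m (D + E) :=
  have : Nonempty V := hconn.nonempty
  ((hasRankAtLeast_bnRank hD).add (hasRankAtLeast_bnRank hE)).le_bnRank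

/-- The Baker–Norine rank is superadditive with respect to non-negative ranks:
if `r_G(D) ≥ 0` and `r_G(E) ≥ 0`, then `r_G(D + E) ≥ r_G(D) + r_G(E)`. -/
theorem bnRank_superadditive {V : Type*} [Fintype V] [DecidableEq V] (m : V → V → ℕ)
    (hm : ∀ v w, m v w = m w v) (hconn : IsConn m)
    (D E : V → ℤ) (hD : 0 ≤ bnRank m D) (hE : 0 ≤ bnRank m E) :
    bnRank m D + bnRank m E ≤ bnRank m (D + E) :=
  bnRank_superadditive_general m hconn D E hD hE
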